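/- Suppose a family of finite-time extinction probabilities for a multitype branching process satisfies: (i) S is partitioned into S₁ = {i : P_{e_i}(‖Y_t‖=0) > 0 for all t > 0} and S₂ = {i : there exists T_i > 0 with P_{e_i}(‖Y_t‖=0) = 0 for t < T_i and > 0 for t > T_i}; (ii) the Markov and branching properties hold. Then S₂ = ∅; i.e., for every type i and every t > 0, P_{e_i}(‖Y_t‖ = 0) > 0. -/

import Mathlib

open MeasureTheory
open scoped ENNReal

/-- The unit mass of type `i`. -/
noncomputable def unitMass (ℓ : ℕ) (i : Fin ℓ) : Fin ℓ → NNReal :=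
  fun m => if m = i then 1 else 0

/-!
At a fixed time, `y ↦ P_y(Y_t = 0)` is an additive character of the cone of initial masses with
values in `[0, 1]`; its value at `0` is `1` since a convolution-idempotent probability on the
cone is `δ₀` (compare Laplace transforms). Hence `P_y(Y_t = 0) > 0` iff every type charged by `y`
has positive extinction probability at time `t`, and for `t` below all thresholds this positivity
set does not depend on `t`. If type `i` had a threshold `T`, the Markov property at time
`s = T - ε/2` would write `P_{e_i}(Y_{s+t} = 0)` as the integral of `z ↦ P_z(Y_t = 0)`, which is
`0` for `t = ε/4` and positive for `t = 3ε/4`, although both integrands vanish on the same set.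
-/

open Filter Set Topology
open scoped NNReal

namespace MeasureTheory.Measure

section CanonicallyOrdered

variable {M : Type*} [AddCommMonoid M] [PartialOrder M] [CanonicallyOrderedAdd M]
  [MeasurableSpace M] [MeasurableAdd₂ M] [MeasurableSingletonClass M]

theorem conv_singleton_zero (μ ν : Measure M) [SFinite ν] : (μ ∗ ν) {0} = μ {0} * ν {0} := by
  have hpre : (fun p : M × M => p.1 + p.2) ⁻¹' {0} = {0} ×ˢ {0} := by
    ext p
    simp [add_eq_zero, Prod.ext_iff]
  rw [conv, map_apply measurable_add (measurableSet_singleton 0), hpre, prod_prod]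

end CanonicallyOrdered

theorem singleton_zero_eq_one_of_conv_self {ι : Type*} [Fintype ι]
    {μ : Measure (ι → ℝ≥0)} [IsProbabilityMeasure μ] (h : μ ∗ μ = μ) : μ {0} = 1 := by
  set F : (ι → ℝ≥0) → ℝ≥0∞ := fun z => ENNReal.ofReal (Real.exp (-∑ i, (z i : ℝ)))
  have hF : Measurable F := by fun_prop
  have hF_add : ∀ x y, F (x + y) = F x * F y := by
    intro x y
    simp only [F, Pi.add_apply, NNReal.coe_add, Finset.sum_add_distrib, neg_add, Real.exp_add,
      ENNReal.ofReal_mul (Real.exp_nonneg _)]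
  have hF_le : ∀ z, F z ≤ 1 := fun z =>
    ENNReal.ofReal_le_one.2 (Real.exp_le_one_iff.2 (neg_nonpos.2 (by positivity)))
  have hF_eq_one : ∀ z, F z = 1 → z = 0 := by
    intro z hz
    have hsum : ∑ i, (z i : ℝ) = 0 := by
      simpa [F, ENNReal.ofReal_eq_one] using hz
    ext i
    exact (Finset.sum_eq_zero_iff_of_nonneg (fun i _ => (z i).2)).1 hsum i (Finset.mem_univ i)
  have hI_ne_top : ∫⁻ z, F z ∂μ ≠ ∞ :=
    ((lintegral_mono hF_le).trans_lt (by simp)).ne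
  have hI : ∫⁻ z, F z ∂μ = 1 := by
    have hsq : (∫⁻ z, F z ∂μ) * ∫⁻ z, F z ∂μ = ∫⁻ z, F z ∂μ := by
      conv_rhs => rw [← h, lintegral_conv hF]
      simp only [hF_add, lintegral_const_mul _ hF, lintegral_mul_const _ hF]
    have hI_pos : ∫⁻ z, F z ∂μ ≠ 0 := by
      rw [← pos_iff_ne_zero, lintegral_pos_iff_support hF]
      have : Function.support F = univ := by ext z; simp [F, Real.exp_pos]
      simp [this]
    exact (ENNReal.mul_eq_left hI_pos hI_ne_top).1 hsq
  have hF_ae : F =ᵐ[μ] 1 :=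
    ae_eq_of_ae_le_of_lintegral_le (ae_of_all _ hF_le) hI_ne_top aemeasurable_const (by simp [hI])
  refine (prob_compl_eq_zero_iff (measurableSet_singleton 0)).1 (ae_iff.1 ?_)
  exact hF_ae.mono fun z hz => hF_eq_one z hz

end MeasureTheory.Measure

namespace AddChar

section CanonicallyOrdered

variable {M : Type*} [AddCommMonoid M] [PartialOrder M] [CanonicallyOrderedAdd M]
  {ψ : AddChar M ℝ≥0∞}

theorem antitone_of_le_one (h : ∀ x, ψ x ≤ 1) : Antitone ψ := by
  intro x y hxy
  obtain ⟨c, rfl⟩ := le_iff_exists_add.1 hxy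
  rw [map_add_eq_mul]
  exact mul_le_of_le_one_right' (h c)

theorem pos_of_pos_of_ne_zero [Archimedean M] (h : ∀ x, ψ x ≤ 1) {a : M} (ha : a ≠ 0)
    (hpos : 0 < ψ a) (b : M) : 0 < ψ b := by
  obtain ⟨n, hn⟩ := Archimedean.arch b (pos_iff_ne_zero.2 ha)
  calc 0 < ψ a ^ n := ENNReal.pow_pos hpos n
    _ = ψ (n • a) := (map_nsmul_eq_pow ψ n a).symm
    _ ≤ ψ b := antitone_of_le_one h hn

end CanonicallyOrdered

theorem map_eq_prod_single {ι M N : Type*} [Fintype ι] [DecidableEq ι] [AddCommMonoid M]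
    [CommMonoid N] (ψ : AddChar (ι → M) N) (x : ι → M) :
    ψ x = ∏ i, ψ (Pi.single i (x i)) := by
  conv_lhs => rw [← Finset.univ_sum_single x]
  induction (Finset.univ : Finset ι) using Finset.induction_on with
  | empty => simp
  | insert i s hi ih => rw [Finset.sum_insert hi, Finset.prod_insert hi, map_add_eq_mul, ih]

variable {ι : Type*} [Fintype ι] {ψ : AddChar (ι → ℝ≥0) ℝ≥0∞}

theorem measurable_of_le_one (h : ∀ x, ψ x ≤ 1) : Measurable ψ := by
  classical
  have : ⇑ψ = fun x => ∏ i, ψ (Pi.single i (x i)) := funext ψ.map_eq_prod_single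
  rw [this]
  refine Finset.measurable_prod _ fun i _ => ?_
  have hanti : Antitone fun a : ℝ≥0 => ψ (Pi.single i a) :=
    (antitone_of_le_one h).comp_monotone (Pi.single_mono i)
  exact hanti.measurable.comp (measurable_pi_apply i)

theorem pos_iff_of_le_one [DecidableEq ι] (h : ∀ x, ψ x ≤ 1) (x : ι → ℝ≥0) :
    0 < ψ x ↔ ∀ i, x i ≠ 0 → 0 < ψ (Pi.single i 1) := by
  rw [map_eq_prod_single, CanonicallyOrderedAdd.prod_pos]
  simp only [Finset.mem_univ, forall_const]
  refine forall_congr' fun i => ?_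
  set φ := ψ.compAddMonoidHom (AddMonoidHom.single _ i)
  have hφ : ∀ a, φ a ≤ 1 := fun a => h _
  by_cases hx : x i = 0
  · simp [hx]
  · exact ⟨fun hpos _ => φ.pos_of_pos_of_ne_zero hφ hx hpos 1,
      fun hpos => φ.pos_of_pos_of_ne_zero hφ one_ne_zero (hpos hx) (x i)⟩

end AddChar

section Extinction

variable {ι : Type*} [Fintype ι] {ν : (ι → ℝ≥0) → Measure (ι → ℝ≥0)}

noncomputable def extinctionChar (hprob : ∀ y, IsProbabilityMeasure (ν y))
    (hconv : ∀ y y', ν (y + y') = ν y ∗ ν y') : AddChar (ι → ℝ≥0) ℝ≥0∞ where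
  toFun y := ν y {0}
  map_zero_eq_one' :=
    have := hprob 0
    Measure.singleton_zero_eq_one_of_conv_self (by rw [← hconv, add_zero])
  map_add_eq_mul' y y' := by rw [hconv, Measure.conv_singleton_zero]

theorem measurable_measure_singleton_zero (hprob : ∀ y, IsProbabilityMeasure (ν y))
    (hconv : ∀ y y', ν (y + y') = ν y ∗ ν y') : Measurable fun y => ν y {0} :=
  (extinctionChar hprob hconv).measurable_of_le_one fun _ => prob_le_one

theorem measure_singleton_zero_pos_iff [DecidableEq ι] (hprob : ∀ y, IsProbabilityMeasure (ν y))
    (hconv : ∀ y y', ν (y + y') = ν y ∗ ν y') (y : ι → ℝ≥0) :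
    0 < ν y {0} ↔ ∀ i, y i ≠ 0 → 0 < ν (Pi.single i 1) {0} :=
  (extinctionChar hprob hconv).pos_iff_of_le_one (fun _ => prob_le_one) y

end Extinction

theorem lintegral_eq_zero_iff_of_pos_iff {α : Type*} [MeasurableSpace α] {μ : Measure α}
    {f g : α → ℝ≥0∞} (hf : Measurable f) (hg : Measurable g) (hfg : ∀ x, 0 < f x ↔ 0 < g x) :
    ∫⁻ x, f x ∂μ = 0 ↔ ∫⁻ x, g x ∂μ = 0 := by
  rw [lintegral_eq_zero_iff hf, lintegral_eq_zero_iff hg]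
  refine eventually_congr (ae_of_all _ fun x => ?_)
  simpa only [Pi.zero_apply, pos_iff_ne_zero, not_iff_not] using hfg x

theorem eventually_pos_iff_pos_of_vanish_near_zero {p : ℝ → ℝ≥0∞}
    (h : (∀ t, 0 < t → 0 < p t) ∨ ∃ T, 0 < T ∧ ∀ t, 0 < t → t < T → p t = 0) :
    ∀ᶠ ε in 𝓝[>] 0, ∀ t ∈ Ioo 0 ε, ∀ t' ∈ Ioo 0 ε, (0 < p t ↔ 0 < p t') := by
  rcases h with hpos | ⟨T, hT, hzero⟩
  · exact .of_forall fun _ t ht t' ht' => iff_of_true (hpos t ht.1) (hpos t' ht'.1)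
  · filter_upwards [Ioo_mem_nhdsGT hT] with ε hε t ht t' ht'
    rw [hzero t ht.1 (ht.2.trans hε.2), hzero t' ht'.1 (ht'.2.trans hε.2)]

theorem unitMass_eq_single (ℓ : ℕ) (i : Fin ℓ) : unitMass ℓ i = Pi.single i 1 := by
  ext m
  simp [unitMass, Pi.single_apply]

theorem stmt_15 (ℓ : ℕ)
    -- `κ y t` is the law at time `t` of the multitype branching process started from `y`
    (κ : (Fin ℓ → NNReal) → ℝ → Measure (Fin ℓ → NNReal))
    (hprob : ∀ y t, 0 ≤ t → IsProbabilityMeasure (κ y t))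
    -- Markov (Chapman–Kolmogorov) property
    (hmarkov : ∀ y s t, 0 ≤ s → 0 ≤ t → ∀ A : Set (Fin ℓ → NNReal), MeasurableSet A →
      κ y (s + t) A = ∫⁻ z, κ z t A ∂(κ y s))
    -- branching property
    (hbranch : ∀ y y' t, 0 ≤ t →
      κ (y + y') t = ((κ y t).prod (κ y' t)).map (fun p => p.1 + p.2))
    -- (i): every type belongs to `S₁` or to `S₂`
    (hpartition : ∀ i : Fin ℓ,
      (∀ t, 0 < t → 0 < κ (unitMass ℓ i) t {0}) ∨
      (∃ T, 0 < T ∧ (∀ t, 0 < t → t < T → κ (unitMass ℓ i) t {0} = 0) ∧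
        (∀ t, T < t → 0 < κ (unitMass ℓ i) t {0}))) :
    -- conclusion: `S₂ = ∅`, i.e. extinction by time `t` has positive probability for all `t > 0`
    ∀ i : Fin ℓ, ∀ t, 0 < t → 0 < κ (unitMass ℓ i) t {0} := by
  have hsmall : ∀ j, ∀ᶠ ε in 𝓝[>] (0 : ℝ), ∀ t ∈ Ioo 0 ε, ∀ t' ∈ Ioo 0 ε,
      (0 < κ (unitMass ℓ j) t {0} ↔ 0 < κ (unitMass ℓ j) t' {0}) := fun j =>
    eventually_pos_iff_pos_of_vanish_near_zero <|
      (hpartition j).imp_right fun ⟨T, hT, hzero, _⟩ => ⟨T, hT, hzero⟩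
  have hmeas : ∀ t, 0 ≤ t → Measurable fun z => κ z t {0} := fun t ht =>
    measurable_measure_singleton_zero (hprob · t ht) (hbranch · · t ht)
  have hpos_iff : ∀ t, 0 ≤ t → ∀ z,
      0 < κ z t {0} ↔ ∀ j, z j ≠ 0 → 0 < κ (unitMass ℓ j) t {0} := by
    simp only [unitMass_eq_single]
    exact fun t ht => measure_singleton_zero_pos_iff (hprob · t ht) (hbranch · · t ht)
  intro i t ht
  rcases hpartition i with hS₁ | ⟨T, hT, hzero, hpos⟩
  · exact hS₁ t ht
  exfalso
  obtain ⟨ε, hε, hεT⟩ := ((eventually_all.2 hsmall).and (Ioo_mem_nhdsGT hT)).exists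
  have hs : 0 ≤ T - ε / 2 := by linarith [hεT.2]
  have ht₁ : ε / 4 ∈ Ioo 0 ε := ⟨by linarith [hεT.1], by linarith [hεT.1]⟩
  have ht₂ : 3 * ε / 4 ∈ Ioo 0 ε := ⟨by linarith [hεT.1], by linarith [hεT.1]⟩
  have h₁ : ∫⁻ z, κ z (ε / 4) {0} ∂κ (unitMass ℓ i) (T - ε / 2) = 0 := by
    rw [← hmarkov _ _ _ hs ht₁.1.le _ (measurableSet_singleton 0)]
    exact hzero _ (by linarith [ht₁.1]) (by linarith [ht₁.2])
  have h₂ : ∫⁻ z, κ z (3 * ε / 4) {0} ∂κ (unitMass ℓ i) (T - ε / 2) ≠ 0 := by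
    rw [← hmarkov _ _ _ hs ht₂.1.le _ (measurableSet_singleton 0)]
    exact (hpos _ (by linarith [hεT.1])).ne'
  refine h₂ ((lintegral_eq_zero_iff_of_pos_iff (hmeas _ ht₁.1.le) (hmeas _ ht₂.1.le)
    fun z => ?_).1 h₁)
  rw [hpos_iff _ ht₁.1.le, hpos_iff _ ht₂.1.le]
  exact forall_congr' fun j => imp_congr_right fun _ => hε j _ ht₁ _ ht₂
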